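/- Let 𝔽 be a finite field of characteristic 2, V a finite-dimensional 𝔽-vector space, Q : V → 𝔽 a quadratic form whose polar bilinear form B(v,w) = Q(v+w) − Q(v) − Q(w) is nonzero, and γ : V → 𝔽 a linear form. Then there exists v ∈ V with Tr_{𝔽/𝔽_2}(Q(v) + γ(v)) ≠ 0. -/

import Mathlib

/-!
Adding the linear form `γ` does not change the polar form, and the polar form of `Q`, being a
nonzero bilinear form over a field, takes every value; pick `v, w` where it equals some `a` of
trace `1` (the trace of a finite separable extension is surjective). The trace commutes with
taking polar forms, so `Tr ∘ (Q + γ)` has a nonzero polar value and cannot vanish identically.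
-/

namespace QuadraticMap

variable {R M N : Type*}

theorem exists_ne_zero_of_polar_ne_zero [AddCommGroup M] [AddCommGroup N] {f : M → N} {x y : M}
    (h : polar f x y ≠ 0) : ∃ u, f u ≠ 0 := by
  by_contra! hf
  exact h (by simp [polar, hf])

theorem polar_add_map_add [AddCommGroup M] [AddCommGroup N] {F : Type*} [FunLike F M N]
    [AddMonoidHomClass F M N] (f : M → N) (g : F) (x y : M) :
    polar (f + ⇑g) x y = polar f x y := by
  rw [polar_add, add_eq_left]
  simp [polar]

theorem exists_polar_eq [Field R] [AddCommGroup M] [Module R M] (Q : QuadraticForm R M)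
    (hQ : ∃ v w : M, polar Q v w ≠ 0) (a : R) : ∃ v w : M, polar Q v w = a := by
  obtain ⟨v, w, hvw⟩ := hQ
  refine ⟨(a / polar Q v w) • v, w, ?_⟩
  rw [polar_smul_left, smul_eq_mul, div_mul_cancel₀ a hvw]

end QuadraticMap

open QuadraticMap in
theorem stmt_4_general (𝔽 : Type*) [Field 𝔽] [Fintype 𝔽] [Algebra (ZMod 2) 𝔽]
    (V : Type*) [AddCommGroup V] [Module 𝔽 V]
    (Q : QuadraticForm 𝔽 V)
    (hB : ∃ v w : V, QuadraticMap.polar (⇑Q) v w ≠ 0)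
    (γ : V →ₗ[𝔽] 𝔽) :
    ∃ v : V, Algebra.trace (ZMod 2) 𝔽 (Q v + γ v) ≠ 0 := by
  obtain ⟨a, ha⟩ := Algebra.trace_surjective (ZMod 2) 𝔽 1
  obtain ⟨v, w, hvw⟩ := exists_polar_eq Q hB a
  have : polar (Algebra.trace (ZMod 2) 𝔽 ∘ (⇑Q + ⇑γ)) v w ≠ 0 := by
    rw [polar_comp, polar_add_map_add, hvw, ha]
    exact one_ne_zero
  exact exists_ne_zero_of_polar_ne_zero this

theorem stmt_4 (𝔽 : Type*) [Field 𝔽] [Fintype 𝔽] [CharP 𝔽 2] [Algebra (ZMod 2) 𝔽]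
    (V : Type*) [AddCommGroup V] [Module 𝔽 V] [FiniteDimensional 𝔽 V]
    (Q : QuadraticForm 𝔽 V)
    (hB : ∃ v w : V, QuadraticMap.polar (⇑Q) v w ≠ 0)
    (γ : V →ₗ[𝔽] 𝔽) :
    ∃ v : V, Algebra.trace (ZMod 2) 𝔽 (Q v + γ v) ≠ 0 :=
  stmt_4_general 𝔽 V Q hB γ
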